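/- arXiv:2301.03243 — 7 statements merged into one kernel-verified Lean document; each statement's English description precedes it below -/
import Mathlib

section
/- If ρ is a continuous extended seminorm on an extended locally convex space (X, τ), then the set X_fin^ρ = {x ∈ X : ρ(x) < ∞} is both open and closed in (X, τ). -/
open scoped ENNReal Pointwise
open TopologicalSpace

section ElcsDefs

variable {X : Type*} [AddCommGroup X] [Module ℝ X]

/-- An extended seminorm: absolutely homogeneous (with `∞·0 = 0` conventions of `ℝ≥0∞`)
and subadditive map into `[0,∞]`. -/
def IsExtSeminorm (ρ : X → ℝ≥0∞) : Prop :=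
  (∀ (a : ℝ) (x : X), ρ (a • x) = ENNReal.ofReal |a| * ρ x) ∧
  (∀ x y : X, ρ (x + y) ≤ ρ x + ρ y)

/-- An extended norm is a definite extended seminorm. -/
def IsExtNorm (ρ : X → ℝ≥0∞) : Prop :=
  IsExtSeminorm ρ ∧ ∀ x : X, ρ x = 0 → x = 0

/-- The topology induced by a family of extended seminorms: generated by all balls. -/
def elcsTopology (P : Set (X → ℝ≥0∞)) : TopologicalSpace X :=
  TopologicalSpace.generateFrom
    {s | ∃ ρ ∈ P, ∃ c : X, ∃ ε : ℝ≥0∞, 0 < ε ∧ s = {x | ρ (x - c) < ε}}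

/-- `(X, t)` is an extended locally convex space with defining family `P`. -/
def IsELCS (t : TopologicalSpace X) (P : Set (X → ℝ≥0∞)) : Prop :=
  (∀ ρ ∈ P, IsExtSeminorm ρ) ∧ t = elcsTopology P

theorem IsExtSeminorm.map_zero {ρ : X → ℝ≥0∞} (h : IsExtSeminorm ρ) : ρ 0 = 0 := by
  have h0 := h.1 0 0
  simpa using h0

/-- The finiteness subspace `X_fin^ρ = {x : ρ x < ∞}` of an extended seminorm. -/
def finSubmodule {ρ : X → ℝ≥0∞} (h : IsExtSeminorm ρ) : Submodule ℝ X where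
  carrier := {x | ρ x < ⊤}
  add_mem' := fun {x y} hx hy =>
    lt_of_le_of_lt (h.2 x y) (ENNReal.add_lt_top.2 ⟨hx, hy⟩)
  zero_mem' := by simp [Set.mem_setOf_eq, h.map_zero]
  smul_mem' := fun a x hx => by
    simp only [Set.mem_setOf_eq, h.1 a x]
    exact ENNReal.mul_lt_top ENNReal.ofReal_lt_top hx

/-- The finite subspace `X_fin` of an elcs: points where every continuous extended
seminorm is finite. -/
def XfinSubmodule (t : TopologicalSpace X) : Submodule ℝ X where
  carrier := {x | ∀ ρ : X → ℝ≥0∞, IsExtSeminorm ρ → @Continuous X ℝ≥0∞ t _ ρ → ρ x < ⊤}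
  add_mem' := fun {x y} hx hy ρ hρ hc =>
    lt_of_le_of_lt (hρ.2 x y) (ENNReal.add_lt_top.2 ⟨hx ρ hρ hc, hy ρ hρ hc⟩)
  zero_mem' := by
    intro ρ hρ _
    rw [hρ.map_zero]
    exact ENNReal.zero_lt_top
  smul_mem' := fun a x hx ρ hρ hc => by
    have h1 := hρ.1 a x
    rw [h1]
    exact ENNReal.mul_lt_top ENNReal.ofReal_lt_top (hx ρ hρ hc)

/-- The continuous dual of `(X, t)` as a submodule of the linear dual. -/
noncomputable def dualSubmodule (t : TopologicalSpace X) : Submodule ℝ (X →ₗ[ℝ] ℝ) where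
  carrier := {f | @Continuous X ℝ t _ fun x => f x}
  add_mem' := by
    intro f g hf hg
    simp only [Set.mem_setOf_eq, LinearMap.add_apply] at *
    exact hf.add hg
  zero_mem' := by
    simp only [Set.mem_setOf_eq, LinearMap.zero_apply]
    exact @continuous_const X ℝ t _ 0
  smul_mem' := by
    intro c f hf
    simp only [Set.mem_setOf_eq, LinearMap.smul_apply, smul_eq_mul] at *
    exact (@continuous_const X ℝ t _ c).mul hf

/-- The weak topology of `(X, t)`: the initial topology induced by the continuous dual. -/
def weakTopology (t : TopologicalSpace X) : TopologicalSpace X :=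
  ⨅ f : ↥(dualSubmodule t), TopologicalSpace.induced (fun x => f.1 x) inferInstance

/-- The weak* topology on the dual of `(X, t)`: pointwise convergence on `X`. -/
def weakStarTopology (t : TopologicalSpace X) : TopologicalSpace ↥(dualSubmodule t) :=
  ⨅ x : X, TopologicalSpace.induced (fun f : ↥(dualSubmodule t) => f.1 x) inferInstance

/-- `tF` is the finest locally convex (vector) topology on `X` coarser than `t`. -/
def IsFlcTopology (t tF : TopologicalSpace X) : Prop :=
  t ≤ tF ∧ @IsTopologicalAddGroup X tF _ ∧ @ContinuousSMul ℝ X _ _ tF ∧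
    @LocallyConvexSpace ℝ X _ _ _ _ tF ∧
    ∀ t' : TopologicalSpace X, t ≤ t' → @IsTopologicalAddGroup X t' _ →
      @ContinuousSMul ℝ X _ _ t' → @LocallyConvexSpace ℝ X _ _ _ _ t' → tF ≤ t'

/-- A set `A` is bounded in an elcs: for every neighborhood `U` of `0` there are `r > 0`
and a finite `F ⊆ A` with `A ⊆ F + r • U`. -/
def ElcsBounded (t : TopologicalSpace X) (A : Set X) : Prop :=
  ∀ U ∈ @nhds X t 0, ∃ r : ℝ, 0 < r ∧ ∃ F : Set X, F.Finite ∧ F ⊆ A ∧ A ⊆ F + r • U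

/-- `0 ∈ Core U`: `U` absorbs every point of `X`. -/
def ZeroInCore (U : Set X) : Prop :=
  ∀ x : X, ∃ δ : ℝ, 0 < δ ∧ ∀ s : ℝ, 0 ≤ s → s ≤ δ → s • x ∈ U

/-- A family of linear functionals is equicontinuous on `(X, t)` if it is uniformly bounded
by `1` on some neighborhood of `0`. -/
def EquicontSet (t : TopologicalSpace X) (A : Set (X →ₗ[ℝ] ℝ)) : Prop :=
  ∃ U ∈ @nhds X t 0, ∀ f ∈ A, ∀ x ∈ U, |f x| ≤ 1

/-- The extended-seminorm-valued sup functional `ρ_A(x) = sup_{f ∈ A} |f x|`. -/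
noncomputable def dualSupFun (A : Set (X →ₗ[ℝ] ℝ)) : X → ℝ≥0∞ :=
  fun x => ⨆ f ∈ A, ENNReal.ofReal |f x|

/-- The topology on the dual of uniform convergence on members of a family `𝔅` of subsets
of `X`. -/
def ucTopology (t : TopologicalSpace X) (𝔅 : Set (Set X)) :
    TopologicalSpace ↥(dualSubmodule t) :=
  TopologicalSpace.generateFrom
    {s | ∃ B ∈ 𝔅, ∃ g : ↥(dualSubmodule t), ∃ ε : ℝ≥0∞, 0 < ε ∧
      s = {f | (⨆ x ∈ B, ENNReal.ofReal |f.1 x - g.1 x|) < ε}}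

/-- A vector topology is normable if it is induced by a single everywhere-finite
extended norm, i.e. by a norm. -/
def IsNormableTop {Y : Type*} [AddCommGroup Y] [Module ℝ Y] (t : TopologicalSpace Y) : Prop :=
  ∃ ρ : Y → ℝ≥0∞, IsExtNorm ρ ∧ (∀ y, ρ y < ⊤) ∧ t = elcsTopology {ρ}

/-- `Y` has countable (algebraic) dimension over `ℝ`. -/
def HasCountableDim (Y : Type*) [AddCommGroup Y] [Module ℝ Y] : Prop :=
  ∃ s : Set Y, s.Countable ∧ Submodule.span ℝ s = ⊤

/-- The Minkowski functional of a set, with values in `[0,∞]` (`inf ∅ = ∞`). -/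
noncomputable def minkowskiE (U : Set X) : X → ℝ≥0∞ :=
  fun x => sInf (ENNReal.ofReal '' {r : ℝ | 0 < r ∧ x ∈ r • U})

end ElcsDefs

section FunctionSpaces

variable {Y : Type*} [TopologicalSpace Y]

/-- The subspace of continuous functions that are bounded on `B`. -/
def boundedOnSubmodule (B : Set Y) : Submodule ℝ C(Y, ℝ) where
  carrier := {f | ∃ M : ℝ, ∀ x ∈ B, |f x| ≤ M}
  add_mem' := by
    rintro f g ⟨M, hM⟩ ⟨N, hN⟩
    exact ⟨M + N, fun x hx => (abs_add_le _ _).trans (add_le_add (hM x hx) (hN x hx))⟩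
  zero_mem' := ⟨0, by simp⟩
  smul_mem' := by
    rintro c f ⟨M, hM⟩
    refine ⟨|c| * M, fun x hx => ?_⟩
    simp only [ContinuousMap.smul_apply, smul_eq_mul, abs_mul]
    exact mul_le_mul_of_nonneg_left (hM x hx) (abs_nonneg c)

/-- The sup extended seminorm `ρ_B` on `C(Y, ℝ)` associated to `B ⊆ Y`. -/
noncomputable def supExtSeminorm (B : Set Y) : C(Y, ℝ) → ℝ≥0∞ :=
  fun f => ⨆ x ∈ B, ENNReal.ofReal |f x|

end FunctionSpaces

/- `{x | ρ x < ∞}` is the preimage of the open set `[0, ∞)` under `ρ`, hence open; it is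
also an additive subgroup, and in a group whose translations are homeomorphisms an open subgroup
is closed, its complement being a union of cosets. -/

section ElcsTranslation

open Topology

variable {X : Type*} [AddCommGroup X]

lemma continuous_add_right_elcsTopology (P : Set (X → ℝ≥0∞)) (v : X) :
    Continuous[elcsTopology P, elcsTopology P] (· + v) := by
  refine continuous_generateFrom_iff.mpr ?_
  rintro s ⟨ρ, hρ, c, ε, hε, rfl⟩
  have hball : (· + v) ⁻¹' {x | ρ (x - c) < ε} = {x | ρ (x - (c - v)) < ε} := by
    ext y
    simp only [Set.mem_preimage, Set.mem_setOf_eq, sub_sub_eq_add_sub]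
  rw [hball]
  exact isOpen_generateFrom_of_mem ⟨ρ, hρ, c - v, ε, hε, rfl⟩

lemma separatelyContinuousAdd_elcsTopology (P : Set (X → ℝ≥0∞)) :
    @SeparatelyContinuousAdd X (elcsTopology P) _ := by
  let _ := elcsTopology P
  exact
    { continuous_const_add := fun {a} => by
        simpa only [add_comm a] using continuous_add_right_elcsTopology P a
      continuous_add_const := fun {a} => continuous_add_right_elcsTopology P a }

end ElcsTranslation

/-- In an elcs, the finiteness subspace `X_fin^ρ` of a continuous extended
seminorm `ρ` is both open and closed. -/
theorem stmt0 {X : Type*} [AddCommGroup X] [Module ℝ X]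
    (t : TopologicalSpace X) (P : Set (X → ℝ≥0∞)) (hP : IsELCS t P)
    (ρ : X → ℝ≥0∞) (hρ : IsExtSeminorm ρ) (hc : @Continuous X ℝ≥0∞ t _ ρ) :
    @IsOpen X t {x | ρ x < ⊤} ∧ @IsClosed X t {x | ρ x < ⊤} := by
  obtain ⟨-, rfl⟩ := hP
  let _ := elcsTopology P
  have := separatelyContinuousAdd_elcsTopology P
  have hopen : IsOpen {x | ρ x < ⊤} := isOpen_Iio.preimage hc
  exact ⟨hopen, (finSubmodule hρ).toAddSubgroup.isClosed_of_isOpen hopen⟩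
end

section
/- Let (X, τ) be an extended locally convex space with finest coarser locally convex topology τ_F. Then (X, τ) and (X, τ_F) have the same collection of bounded sets if and only if X = X_fin, i.e., (X, τ) is a locally convex space. -/
open scoped ENNReal Pointwise
open TopologicalSpace

/-!
If `ρ x = ∞` for a `τ`-continuous extended seminorm `ρ`, the points `0` and `x / (n + 1)` form
a null sequence in the vector topology `τ_F`, hence a `τ_F`-bounded set; but any two of them are
at `ρ`-distance `∞`, so no finite `F` satisfies `A ⊆ F + r • {ρ < 1}` and `A` is not
`τ`-bounded. Conversely, if `X = X_fin` then every defining extended seminorm is finite, so `τ`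
is generated by the topologies of finitely many real seminorms, hence locally convex, and
`τ = τ_F`.
-/

open Filter Topology

section Development

variable {X : Type*} [AddCommGroup X]

theorem elcsTopology_eq_iInf (P : Set (X → ℝ≥0∞)) :
    elcsTopology P = ⨅ ρ : P, elcsTopology {(ρ : X → ℝ≥0∞)} := by
  simp only [elcsTopology]
  rw [← generateFrom_iUnion]
  congr 1
  ext s
  simp

variable [Module ℝ X]

namespace IsExtSeminorm

variable {ρ : X → ℝ≥0∞}

theorem map_neg (h : IsExtSeminorm ρ) (x : X) : ρ (-x) = ρ x := by
  simpa using h.1 (-1) x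

theorem map_sub_comm (h : IsExtSeminorm ρ) (x y : X) : ρ (x - y) = ρ (y - x) := by
  rw [← neg_sub, h.map_neg]

noncomputable abbrev pseudoEMetricSpace (h : IsExtSeminorm ρ) : PseudoEMetricSpace X where
  edist x y := ρ (x - y)
  edist_self x := by simp [h.map_zero]
  edist_comm x y := h.map_sub_comm x y
  edist_triangle x y z := by simpa using h.2 (x - y) (y - z)

theorem elcsTopology_singleton (h : IsExtSeminorm ρ) :
    elcsTopology {ρ} = h.pseudoEMetricSpace.toUniformSpace.toTopologicalSpace := by
  let _ := h.pseudoEMetricSpace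
  apply le_antisymm
  · intro s hs
    refine (@isOpen_iff_forall_mem_open X (elcsTopology {ρ}) s).2 fun x hx => ?_
    obtain ⟨ε, hε, hball⟩ := EMetric.isOpen_iff.1 hs x hx
    exact ⟨_, hball, .basic _ ⟨ρ, rfl, x, ε, hε, rfl⟩, Metric.mem_eball_self hε⟩
  · refine le_generateFrom ?_
    rintro _ ⟨_, rfl, c, ε, -, rfl⟩
    exact Metric.isOpen_eball (x := c) (ε := ε)

theorem continuous_elcsTopology {P : Set (X → ℝ≥0∞)} (h : IsExtSeminorm ρ) (hρ : ρ ∈ P) :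
    Continuous[elcsTopology P, _] ρ := by
  let _ := h.pseudoEMetricSpace
  have hle : elcsTopology P ≤ _ :=
    ((elcsTopology_eq_iInf P).trans_le (iInf_le _ ⟨ρ, hρ⟩)).trans_eq h.elcsTopology_singleton
  refine continuous_le_dom hle ?_
  have hdist : Continuous fun x => ρ (x - 0) := continuous_id.edist continuous_const
  simpa only [sub_zero] using hdist

noncomputable def toSeminorm (h : IsExtSeminorm ρ) (hfin : ∀ x, ρ x ≠ ⊤) : Seminorm ℝ X :=
  Seminorm.of (fun x => (ρ x).toReal)
    (fun x y => by
      rw [← ENNReal.toReal_add (hfin x) (hfin y)]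
      exact ENNReal.toReal_mono (ENNReal.add_ne_top.2 ⟨hfin x, hfin y⟩) (h.2 x y))
    (fun a x => by
      rw [h.1, ENNReal.toReal_mul, ENNReal.toReal_ofReal (abs_nonneg a), Real.norm_eq_abs])

theorem pseudoEMetricSpace_eq_of_ne_top (h : IsExtSeminorm ρ) (hfin : ∀ x, ρ x ≠ ⊤) :
    h.pseudoEMetricSpace =
      (h.toSeminorm hfin).toAddGroupSeminorm.toSeminormedAddCommGroup.toPseudoEMetricSpace := by
  refine PseudoEMetricSpace.ext ?_
  ext x y
  let _ := (h.toSeminorm hfin).toAddGroupSeminorm.toSeminormedAddCommGroup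
  change ρ (x - y) = edist x y
  rw [edist_dist, dist_eq_norm]
  show ρ (x - y) = ENNReal.ofReal (ρ (x - y)).toReal
  rw [ENNReal.ofReal_toReal (hfin _)]

theorem pairwise_range_smul_of_eq_top (h : IsExtSeminorm ρ) {x : X} (hx : ρ x = ⊤) :
    (Set.range fun s : ℝ => s • x).Pairwise fun a b => ρ (a - b) = ⊤ := by
  rintro _ ⟨s, rfl⟩ _ ⟨s', rfl⟩ hne
  have hss : s - s' ≠ 0 := sub_ne_zero.2 fun hs => hne (hs ▸ rfl)
  rw [← sub_smul, h.1, hx, ENNReal.mul_top (by simpa using hss)]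

end IsExtSeminorm

def IsLocallyConvexVectorTopology (t : TopologicalSpace X) : Prop :=
  @IsTopologicalAddGroup X t _ ∧ @ContinuousSMul ℝ X _ _ t ∧ @LocallyConvexSpace ℝ X _ _ _ _ t

theorem Seminorm.isLocallyConvexVectorTopology (p : Seminorm ℝ X) :
    IsLocallyConvexVectorTopology
      p.toAddGroupSeminorm.toSeminormedAddCommGroup.toUniformSpace.toTopologicalSpace := by
  let _ := p.toAddGroupSeminorm.toSeminormedAddCommGroup
  let _ : NormedSpace ℝ X := ⟨fun a x => (map_smul_eq_mul p a x).le⟩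
  exact ⟨inferInstance, inferInstance, inferInstance⟩

theorem IsLocallyConvexVectorTopology.iInf {ι : Type*} {t : ι → TopologicalSpace X}
    (h : ∀ i, IsLocallyConvexVectorTopology (t i)) : IsLocallyConvexVectorTopology (⨅ i, t i) :=
  ⟨topologicalAddGroup_iInf fun i => (h i).1, continuousSMul_iInf fun i => (h i).2.1,
    LocallyConvexSpace.iInf fun i => (h i).2.2⟩

theorem isLocallyConvexVectorTopology_elcsTopology {P : Set (X → ℝ≥0∞)}
    (hP : ∀ ρ ∈ P, IsExtSeminorm ρ) (hfin : ∀ ρ ∈ P, ∀ x, ρ x ≠ ⊤) :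
    IsLocallyConvexVectorTopology (elcsTopology P) := by
  rw [elcsTopology_eq_iInf]
  refine .iInf fun ρ => ?_
  rw [(hP ρ ρ.2).elcsTopology_singleton, (hP ρ ρ.2).pseudoEMetricSpace_eq_of_ne_top (hfin ρ ρ.2)]
  exact Seminorm.isLocallyConvexVectorTopology _

theorem IsFlcTopology.eq_of_isLocallyConvexVectorTopology {t tF : TopologicalSpace X}
    (hF : IsFlcTopology t tF) (ht : IsLocallyConvexVectorTopology t) : t = tF :=
  le_antisymm hF.1 (hF.2.2.2.2 t le_rfl ht.1 ht.2.1 ht.2.2)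

theorem ne_top_of_xfinSubmodule_eq_top {P : Set (X → ℝ≥0∞)} (hP : ∀ ρ ∈ P, IsExtSeminorm ρ)
    (htop : XfinSubmodule (elcsTopology P) = ⊤) : ∀ ρ ∈ P, ∀ x, ρ x ≠ ⊤ := by
  intro ρ hρ x
  have hx : x ∈ XfinSubmodule (elcsTopology P) := htop ▸ Submodule.mem_top
  exact (hx ρ (hP ρ hρ) ((hP ρ hρ).continuous_elcsTopology hρ)).ne

theorem elcsBounded_insert_zero_range {t : TopologicalSpace X} {a : ℕ → X}
    (ha : Tendsto a atTop (@nhds X t 0)) : ElcsBounded t (insert 0 (Set.range a)) := by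
  intro U hU
  have h0U : (0 : X) ∈ U := @mem_of_mem_nhds X t _ _ hU
  obtain ⟨N, hN⟩ := mem_atTop_sets.1 (ha hU)
  refine ⟨1, one_pos, insert 0 (a '' Set.Iio N), ((Set.finite_Iio N).image a).insert 0,
    Set.insert_subset_insert (Set.image_subset_range a _), ?_⟩
  rw [one_smul]
  rintro _ (rfl | ⟨n, rfl⟩)
  · exact ⟨0, Set.mem_insert _ _, 0, h0U, zero_add 0⟩
  · rcases lt_or_ge n N with hn | hn
    · exact ⟨a n, Set.mem_insert_of_mem _ ⟨n, hn, rfl⟩, 0, h0U, add_zero _⟩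
    · exact ⟨0, Set.mem_insert _ _, a n, hN n hn, zero_add _⟩

theorem ElcsBounded.finite_of_pairwise {t : TopologicalSpace X} {ρ : X → ℝ≥0∞}
    (hρ : IsExtSeminorm ρ) (hcont : @ContinuousAt X ℝ≥0∞ t _ ρ 0) {A : Set X}
    (hA : ElcsBounded t A) (hsep : A.Pairwise fun a b => ρ (a - b) = ⊤) : A.Finite := by
  have hU : {y | ρ y < 1} ∈ @nhds X t 0 :=
    hcont.preimage_mem_nhds (Iio_mem_nhds (by simp [hρ.map_zero]))
  obtain ⟨r, -, F, hF, hFA, hcov⟩ := hA _ hU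
  refine hF.subset fun a ha => ?_
  obtain ⟨f, hf, _, ⟨v, hv, rfl⟩, rfl⟩ := hcov ha
  by_contra haF
  have hfin : ρ (f + r • v - f) ≠ ⊤ := by
    rw [add_sub_cancel_left, hρ.1]
    exact ENNReal.mul_ne_top ENNReal.ofReal_ne_top (hv.trans ENNReal.one_lt_top).ne
  exact hfin (hsep ha (hFA hf) fun h => haF (by rwa [h]))

theorem exists_elcsBounded_not_elcsBounded {t tF : TopologicalSpace X}
    (hsmul : @ContinuousSMul ℝ X _ _ tF) {x : X} (hx : x ∉ XfinSubmodule t) :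
    ∃ A, ElcsBounded tF A ∧ ¬ ElcsBounded t A := by
  obtain ⟨ρ, hρ, hcont, hρx⟩ :
      ∃ ρ, IsExtSeminorm ρ ∧ Continuous[t, _] ρ ∧ ρ x = ⊤ := by
    simpa [XfinSubmodule] using hx
  have hx0 : x ≠ 0 := by
    rintro rfl
    simp [hρ.map_zero] at hρx
  set a : ℕ → X := fun n => (1 / ((n : ℝ) + 1)) • x
  have ha : Tendsto a atTop (@nhds X tF 0) := by
    let _ := tF
    have := hsmul
    simpa [a] using (tendsto_one_div_add_atTop_nhds_zero_nat (𝕜 := ℝ)).smul_const x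
  have ha_inj : Function.Injective a :=
    (smul_left_injective ℝ hx0).comp fun m n hmn => by simpa using hmn
  refine ⟨insert 0 (Set.range a), elcsBounded_insert_zero_range ha, fun hA => ?_⟩
  have hsub : insert 0 (Set.range a) ⊆ Set.range fun s : ℝ => s • x :=
    Set.insert_subset_iff.2 ⟨⟨0, zero_smul ℝ x⟩, Set.range_subset_iff.2 fun n => ⟨_, rfl⟩⟩
  have hfin := hA.finite_of_pairwise hρ (@Continuous.continuousAt _ _ t _ _ _ hcont)
    ((hρ.pairwise_range_smul_of_eq_top hρx).mono hsub)
  exact Set.infinite_range_of_injective ha_inj (hfin.subset (Set.subset_insert _ _))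

end Development

/-- `(X, τ)` and `(X, τ_F)` have the same bounded sets iff `X = X_fin`. -/
theorem stmt3 {X : Type*} [AddCommGroup X] [Module ℝ X]
    (t tF : TopologicalSpace X) (P : Set (X → ℝ≥0∞)) (hP : IsELCS t P)
    (hF : IsFlcTopology t tF) :
    (∀ A : Set X, ElcsBounded t A ↔ ElcsBounded tF A) ↔
      XfinSubmodule t = (⊤ : Submodule ℝ X) := by
  obtain ⟨hPsem, rfl⟩ := hP
  constructor
  · intro h
    refine Submodule.eq_top_iff'.2 fun x => ?_
    by_contra hx
    obtain ⟨A, hAF, hAt⟩ := exists_elcsBounded_not_elcsBounded hF.2.2.1 hx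
    exact hAt ((h A).2 hAF)
  · intro htop
    have hfin := ne_top_of_xfinSubmodule_eq_top hPsem htop
    rw [← hF.eq_of_isLocallyConvexVectorTopology
      (isLocallyConvexVectorTopology_elcsTopology hPsem hfin)]
    exact fun A => Iff.rfl
end

section
/- Let (X, τ) be an elcs with flc topology τ_F and weak topology τ_w. If τ_F = τ_w, then for every continuous extended seminorm ρ on (X, τ), the quotient vector space X / X_fin^ρ is finite dimensional. -/
open scoped ENNReal Pointwise
open TopologicalSpace

/-!
The subspace `S = X_fin^ρ` is `τ`-open, so a linear map with kernel `S` is locally constant and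
hence `τ`-continuous into any target. Composing `X → X ⧸ S` with Hamel-basis coordinates in `ℓ¹`
gives such a map `g` into a normed space. The topology induced by `g` is locally convex and coarser
than `τ`, so `g` is `τ_F`-continuous, i.e. weakly continuous. Thus `g⁻¹(ball 0 1)` contains a weak
neighbourhood of `0`, which contains the subspace `⋂_{i ∈ I} ker fᵢ` for finitely many `fᵢ ∈ X*`;
its image is a subspace inside the unit ball, hence `0`. So `⋂_{i ∈ I} ker fᵢ ⊆ S` and
`dim X ⧸ S ≤ |I|`.
-/

open Filter Topology

noncomputable def Module.Basis.toLp {ι V : Type*} [AddCommGroup V] [Module ℝ V]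
    (b : Module.Basis ι ℝ V) (p : ℝ≥0∞) : V →ₗ[ℝ] lp (fun _ : ι => ℝ) p :=
  lp.linearMapOfLE ℝ _ bot_le ∘ₗ lp.zeroBasis.repr.symm.toLinearMap ∘ₗ b.repr.toLinearMap

lemma Module.Basis.toLp_injective {ι V : Type*} [AddCommGroup V] [Module ℝ V]
    (b : Module.Basis ι ℝ V) (p : ℝ≥0∞) : Function.Injective (b.toLp p) := by
  simp only [Module.Basis.toLp, LinearMap.coe_comp, LinearEquiv.coe_coe]
  refine (Function.Injective.comp (fun f g hfg => ?_) lp.zeroBasis.repr.symm.injective).comp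
    b.repr.injective
  ext1
  simpa using congrArg (⇑) hfg

lemma continuous_sub_const_elcsTopology {X : Type*} [AddCommGroup X] [Module ℝ X]
    (P : Set (X → ℝ≥0∞)) (c : X) : Continuous[elcsTopology P, elcsTopology P] (· - c) := by
  refine continuous_generateFrom_iff.2 ?_
  rintro s ⟨σ, hσ, c₀, ε, hε, rfl⟩
  refine isOpen_generateFrom_of_mem ⟨σ, hσ, c + c₀, ε, hε, ?_⟩
  ext y
  simp [sub_sub]

lemma LinearMap.continuous_of_isOpen_ker {R M N : Type*} [Ring R] [AddCommGroup M] [Module R M]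
    [AddCommGroup N] [Module R N] {t : TopologicalSpace M} [TopologicalSpace N]
    (hsub : ∀ c : M, Continuous[t, t] (· - c)) (g : M →ₗ[R] N)
    (hg : IsOpen[t] (LinearMap.ker g : Set M)) : @Continuous _ _ t _ g := by
  let _ := t
  refine continuous_iff_continuousAt.2 fun x => (continuousAt_const (y := g x)).congr ?_
  have hx : {y | y - x ∈ LinearMap.ker g} ∈ 𝓝 x :=
    (hsub x).isOpen_preimage _ hg |>.mem_nhds (by simp)
  filter_upwards [hx] with y hy
  rw [LinearMap.mem_ker, map_sub, sub_eq_zero] at hy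
  exact hy.symm

lemma IsFlcTopology.continuous_of_continuous {X W : Type*} [AddCommGroup X] [Module ℝ X]
    [AddCommGroup W] [Module ℝ W] [TopologicalSpace W] [IsTopologicalAddGroup W]
    [ContinuousSMul ℝ W] [LocallyConvexSpace ℝ W] {t tF : TopologicalSpace X}
    (hF : IsFlcTopology t tF) (g : X →ₗ[ℝ] W) (hg : @Continuous _ _ t _ g) :
    @Continuous _ _ tF _ g :=
  continuous_iff_le_induced.2 <| hF.2.2.2.2 _ (continuous_iff_le_induced.1 hg)
    (topologicalAddGroup_induced g) (continuousSMul_induced g) (LocallyConvexSpace.induced g)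

lemma eq_zero_of_forall_norm_smul_lt_one {W : Type*} [NormedAddCommGroup W] [NormedSpace ℝ W]
    {v : W} (hv : ∀ s : ℝ, ‖s • v‖ < 1) : v = 0 := by
  by_contra hne
  have hpos : 0 < ‖v‖ := norm_pos_iff.2 hne
  have h2 := hv (2 / ‖v‖)
  rw [norm_smul, Real.norm_eq_abs, abs_of_pos (by positivity), div_mul_cancel₀ _ hpos.ne'] at h2
  linarith

lemma exists_finite_iInf_ker_le_ker_of_continuous {X ι W : Type*} [AddCommGroup X] [Module ℝ X]
    [NormedAddCommGroup W] [NormedSpace ℝ W] (F : ι → X →ₗ[ℝ] ℝ) (g : X →ₗ[ℝ] W)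
    (hg : @Continuous _ _ (⨅ i, induced (F i) inferInstance) _ g) :
    ∃ I : Set ι, I.Finite ∧ ⨅ i : I, LinearMap.ker (F i) ≤ LinearMap.ker g := by
  have hU : g ⁻¹' Metric.ball 0 1 ∈ ⨅ i, comap (F i) (𝓝 (F i 0)) := by
    let _ : TopologicalSpace X := ⨅ i, induced (F i) inferInstance
    have hball : Metric.ball (g 0) 1 ∈ 𝓝 (g 0) := Metric.ball_mem_nhds _ one_pos
    simpa only [nhds_iInf, nhds_induced, map_zero] using hg.continuousAt.preimage_mem_nhds hball
  obtain ⟨I, hI, V, hV, hUV⟩ := mem_iInf.1 hU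
  refine ⟨I, hI, fun x hx => ?_⟩
  have hx' : ∀ i : I, F i x = 0 := fun i => by
    simpa using (Submodule.mem_iInf _).1 hx i
  refine eq_zero_of_forall_norm_smul_lt_one fun s => ?_
  suffices s • x ∈ g ⁻¹' Metric.ball 0 1 by
    rwa [Set.mem_preimage, map_smul, mem_ball_zero_iff] at this
  rw [hUV]
  refine Set.mem_iInter.2 fun i => ?_
  obtain ⟨u, hu, hsub⟩ := hV i
  refine hsub ?_
  simpa [hx' i] using mem_of_mem_nhds hu

lemma Submodule.finiteDimensional_quotient_of_iInf_ker_le {K X J : Type*} [Field K]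
    [AddCommGroup X] [Module K X] [Finite J] (F : J → X →ₗ[K] K) {S : Submodule K X}
    (hS : ⨅ j, LinearMap.ker (F j) ≤ S) : FiniteDimensional K (X ⧸ S) := by
  rw [← LinearMap.ker_pi] at hS
  have : FiniteDimensional K (X ⧸ LinearMap.ker (LinearMap.pi F)) :=
    .of_injective _ (LinearMap.quotKerEquivRange (LinearMap.pi F)).injective
  exact Module.Finite.of_surjective _ (Submodule.factor_surjective hS)

/-- if `τ_F = τ_w` then `X / X_fin^ρ` is finite dimensional for every
continuous extended seminorm `ρ`. -/
theorem stmt5 {X : Type*} [AddCommGroup X] [Module ℝ X]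
    (t tF : TopologicalSpace X) (P : Set (X → ℝ≥0∞)) (hP : IsELCS t P)
    (hF : IsFlcTopology t tF) (h : tF = weakTopology t)
    (ρ : X → ℝ≥0∞) (hρ : IsExtSeminorm ρ) (hc : @Continuous X ℝ≥0∞ t _ ρ) :
    FiniteDimensional ℝ (X ⧸ finSubmodule hρ) := by
  set S := finSubmodule hρ
  let g := (Module.Basis.ofVectorSpace ℝ (X ⧸ S)).toLp 1 ∘ₗ S.mkQ
  have hker : LinearMap.ker g = S := by
    rw [LinearMap.ker_comp_of_ker_eq_bot _
      (LinearMap.ker_eq_bot.2 (Module.Basis.toLp_injective _ _)), Submodule.ker_mkQ]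
  have hS : IsOpen[t] (S : Set X) := continuous_def.1 hc _ isOpen_Iio
  have hgt : @Continuous _ _ t _ g :=
    g.continuous_of_isOpen_ker (hP.2 ▸ continuous_sub_const_elcsTopology P) (hker.symm ▸ hS)
  have hgw : @Continuous _ _ (weakTopology t) _ g := h ▸ hF.continuous_of_continuous g hgt
  obtain ⟨I, hI, hIS⟩ := exists_finite_iInf_ker_le_ker_of_continuous
    (fun f : dualSubmodule t => (f : X →ₗ[ℝ] ℝ)) g hgw
  have := hI.to_subtype
  exact Submodule.finiteDimensional_quotient_of_iInf_ker_le _ (hker ▸ hIS)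
end

section
/- Let (X, ‖·‖) be an extended normed linear space with X = X_fin ⊕ M and flc topology τ_F. Then the subspace (M, τ_F|_M) is separable if and only if the dimension of M is countable. -/
/-!
Every linear functional `g` on `M`, extended by zero on `X_fin`, is constant on the unit balls
of the extended norm, hence continuous for it; the topology induced by such a functional is a
locally convex vector topology coarser than the extended-norm topology, so by maximality of `τ_F`
the functional is `τ_F`-continuous. Thus every linear functional on `(M, τ_F|_M)` is continuous.
If `D ⊆ M` is countable and dense but does not span `M`, some nonzero functional vanishes on `D`,
hence on its closure `M`, which is absurd. Conversely the span of a countable set is separable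
(take rational combinations).
-/

open scoped ENNReal Pointwise
open TopologicalSpace

open Topology

section FiniteSubspace

variable {X : Type*} [AddCommGroup X] {ρ : X → ℝ≥0∞}

lemma isOpen_elcsTopology_ball {P : Set (X → ℝ≥0∞)} (hρP : ρ ∈ P) (c : X) {ε : ℝ≥0∞}
    (hε : 0 < ε) : IsOpen[elcsTopology P] {x | ρ (x - c) < ε} :=
  .basic _ ⟨ρ, hρP, c, ε, hε, rfl⟩

lemma isLocallyConstant_of_finSubmodule_le_ker [Module ℝ X] (hρ : IsExtSeminorm ρ)
    {P : Set (X → ℝ≥0∞)} (hρP : ρ ∈ P) {Y : Type*} [AddCommGroup Y] [Module ℝ Y]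
    (f : X →ₗ[ℝ] Y) (hf : finSubmodule hρ ≤ LinearMap.ker f) :
    @IsLocallyConstant X Y (elcsTopology P) f := by
  let := elcsTopology P
  refine (IsLocallyConstant.iff_eventually_eq _).2 fun c => ?_
  refine Filter.mem_of_superset
    ((isOpen_elcsTopology_ball hρP c one_pos).mem_nhds (by simp [hρ.map_zero])) fun x hx => ?_
  have hxc : x - c ∈ finSubmodule hρ := hx.trans ENNReal.one_lt_top
  simpa [sub_eq_zero] using hf hxc

end FiniteSubspace

lemma IsFlcTopology.continuous_linearMap {X Y : Type*} [AddCommGroup X] [Module ℝ X]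
    [AddCommGroup Y] [Module ℝ Y] [TopologicalSpace Y] [IsTopologicalAddGroup Y]
    [ContinuousSMul ℝ Y] [LocallyConvexSpace ℝ Y] {t tF : TopologicalSpace X}
    (hF : IsFlcTopology t tF) (f : X →ₗ[ℝ] Y) (hf : Continuous[t, _] f) :
    Continuous[tF, _] f := by
  obtain ⟨htF, hga, hsm, hlc, hfinest⟩ := hF
  have hle : tF ≤ tF ⊓ induced f ‹_› :=
    hfinest _ (le_inf htF hf.le_induced)
      (topologicalAddGroup_inf hga (topologicalAddGroup_induced f))
      (@continuousSMul_inf ℝ X _ _ _ _ hsm (continuousSMul_induced f)) (hlc.inf (.induced f))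
  exact continuous_iff_le_induced.2 (hle.trans inf_le_right)

lemma Submodule.span_eq_top_of_dense {𝕜 E : Type*} [Field 𝕜] [TopologicalSpace 𝕜] [T1Space 𝕜]
    [AddCommGroup E] [Module 𝕜 E] [TopologicalSpace E]
    (hcont : ∀ g : Module.Dual 𝕜 E, Continuous g) {D : Set E} (hD : Dense D) :
    span 𝕜 D = ⊤ := by
  by_contra hne
  obtain ⟨g, hg0, hgD⟩ := exists_dual_map_eq_bot_of_lt_top (lt_top_iff_ne_top.2 hne) inferInstance
  have hker : IsClosed (LinearMap.ker g : Set E) := isClosed_singleton.preimage (hcont g)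
  have hDker : D ⊆ LinearMap.ker g := span_le.1 (LinearMap.le_ker_iff_map.2 hgD)
  exact hg0 (LinearMap.ext fun x => hker.closure_subset_iff.2 hDker (hD x))

lemma hasCountableDim_of_separableSpace {E : Type*} [AddCommGroup E] [Module ℝ E]
    [TopologicalSpace E] [SeparableSpace E] (hcont : ∀ g : Module.Dual ℝ E, Continuous g) :
    HasCountableDim E :=
  let ⟨D, hDc, hD⟩ := exists_countable_dense E
  ⟨D, hDc, Submodule.span_eq_top_of_dense hcont hD⟩

lemma separableSpace_of_hasCountableDim {E : Type*} [AddCommGroup E] [Module ℝ E]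
    [TopologicalSpace E] [ContinuousAdd E] [ContinuousSMul ℝ E] (h : HasCountableDim E) :
    SeparableSpace E := by
  obtain ⟨s, hs, hspan⟩ := h
  rw [← isSeparable_univ_iff, ← Submodule.top_coe (R := ℝ), ← hspan]
  exact hs.isSeparable.span

lemma continuous_dual_of_isCompl_finSubmodule {X : Type*} [AddCommGroup X] [Module ℝ X]
    {ρ : X → ℝ≥0∞} (hρ : IsExtSeminorm ρ) {tF : TopologicalSpace X}
    (hF : IsFlcTopology (elcsTopology {ρ}) tF) {M : Submodule ℝ X}
    (hM : IsCompl (finSubmodule hρ) M) (g : Module.Dual ℝ M) :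
    Continuous[induced Subtype.val tF, _] g := by
  set f : X →ₗ[ℝ] ℝ := g ∘ₗ M.projectionOnto _ hM.symm
  have hf : Continuous[tF, _] f := hF.continuous_linearMap f <|
    @IsLocallyConstant.continuous X ℝ (elcsTopology {ρ}) _ f <|
      isLocallyConstant_of_finSubmodule_le_ker hρ (Set.mem_singleton ρ) f fun x hx => by
        simp [f, Submodule.projectionOnto_apply_of_mem_right hM.symm hx]
  have hfg : (fun x : M => f x) = g := by
    funext x
    simp [f, Submodule.projectionOnto_apply_left hM.symm x]
  exact hfg ▸ hf.comp continuous_induced_dom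

/-- for an enls with `X = X_fin ⊕ M`, `(M, τ_F|_M)` is separable iff
`dim M` is countable. -/
theorem stmt9 {X : Type*} [AddCommGroup X] [Module ℝ X]
    (ρ : X → ℝ≥0∞) (hρ : IsExtNorm ρ)
    (t tF : TopologicalSpace X) (ht : t = elcsTopology {ρ})
    (hF : IsFlcTopology t tF)
    (M : Submodule ℝ X) (hM : IsCompl (finSubmodule hρ.1) M) :
    @TopologicalSpace.SeparableSpace ↥M (TopologicalSpace.induced Subtype.val tF) ↔
      HasCountableDim ↥M := by
  subst ht
  let : TopologicalSpace X := tF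
  have : IsTopologicalAddGroup X := hF.2.1
  have : ContinuousSMul ℝ X := hF.2.2.1
  exact ⟨fun _ => hasCountableDim_of_separableSpace
    (continuous_dual_of_isCompl_finSubmodule hρ.1 hF hM), separableSpace_of_hasCountableDim⟩
end

section
/- Let 𝔅 be a bornology with closed base on a metric space (X, d), and equip C(X) with the topology τ_𝔅 of uniform convergence on members of 𝔅, induced by the extended seminorms ρ_B(f) = sup_{x∈B} |f(x)|, B ∈ 𝔅. Then the finest locally convex topology coarser than τ_𝔅 equals the weak topology of (C(X), τ_𝔅) if and only if 𝔅 is the bornology of all finite subsets of X. -/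
open scoped ENNReal Pointwise
open TopologicalSpace

/-! If every member of `𝔅` is finite, each `τ_𝔅`-ball is a finite intersection of preimages under
point evaluations, which are continuous, so `τ_𝔅` is coarser than the weak topology; as the flc
topology lies between the two, all three coincide.

If `B ∈ 𝔅` is infinite, compose `ρ_B` with a linear projection onto the subspace where `ρ_B` is
finite: this is a real seminorm `p ≤ ρ_B`, so the flc topology is finer than the topology of `p`.
Were it weak, `{p < 1}` would contain the common kernel of finitely many continuous functionals,
forcing `p` to vanish there. But Urysohn bump functions at `n + 1` points of `B` span a space of
bounded functions meeting the common kernel of any `n` functionals in a function that does not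
vanish on `B`, and on bounded functions `p = ρ_B`. -/

open Topology

section LinearAlgebra

variable {K V ι κ : Type*} [Field K] [AddCommGroup V] [Module K V] [Fintype ι] [Fintype κ]

theorem exists_ne_zero_forall_apply_sum_smul_eq_zero (hcard : Fintype.card κ < Fintype.card ι)
    (φ : κ → V →ₗ[K] K) (v : ι → V) :
    ∃ c : ι → K, c ≠ 0 ∧ ∀ j, φ j (∑ i, c i • v i) = 0 := by
  set L : (ι → K) →ₗ[K] κ → K := LinearMap.pi φ ∘ₗ Fintype.linearCombination K v
  have hker : LinearMap.ker L ≠ ⊥ :=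
    LinearMap.ker_ne_bot_of_finrank_lt (by simpa only [Module.finrank_fintype_fun_eq_card])
  obtain ⟨c, hc, hc0⟩ := (Submodule.ne_bot_iff _).mp hker
  refine ⟨c, hc0, fun j => ?_⟩
  simpa [L, Fintype.linearCombination_apply] using congr_fun hc j

end LinearAlgebra

section ElcsGeneral

variable {X : Type*} [AddCommGroup X] [Module ℝ X]

theorem IsFlcTopology.le_of_withSeminorms {t tF t' : TopologicalSpace X}
    (hF : IsFlcTopology t tF) (ht' : t ≤ t') {ι : Type*} {q : SeminormFamily ℝ X ι}
    (hq : WithSeminorms (topology := t') q) :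
    tF ≤ t' :=
  hF.2.2.2.2 t' ht' hq.topologicalAddGroup hq.continuousSMul hq.toLocallyConvexSpace

theorem IsFlcTopology.le_weakTopology {t tF : TopologicalSpace X} (hF : IsFlcTopology t tF) :
    tF ≤ weakTopology t :=
  le_iInf fun φ => hF.le_of_withSeminorms (continuous_iff_le_induced.mp φ.2)
    (LinearMap.withSeminorms_induced (norm_withSeminorms ℝ ℝ) φ.1)

theorem exists_finset_forall_apply_eq_zero_imp_mem {t : TopologicalSpace X} {U : Set X}
    (hU : U ∈ @nhds X (weakTopology t) 0) :
    ∃ I : Finset (dualSubmodule t), ∀ x, (∀ φ ∈ I, φ.1 x = 0) → x ∈ U := by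
  have hnhds :
      @nhds X (weakTopology t) 0 = ⨅ φ : dualSubmodule t, (𝓝 0).comap fun x => φ.1 x := by
    rw [weakTopology, nhds_iInf]
    exact iInf_congr fun φ => by rw [nhds_induced, map_zero]
  rw [hnhds, Filter.mem_iInf_finite] at hU
  obtain ⟨I, hI⟩ := hU
  obtain ⟨W, hW, rfl⟩ := Filter.mem_iInf_finset.mp hI
  refine ⟨I, fun x hx => Set.mem_iInter₂.mpr fun φ hφ => ?_⟩
  obtain ⟨N, hN, hNW⟩ := Filter.mem_comap.mp (hW φ hφ)
  exact hNW (by simpa [Set.mem_preimage, hx φ hφ] using mem_of_mem_nhds hN)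

theorem Seminorm.exists_finset_forall_apply_eq_zero_imp_eq_zero {t : TopologicalSpace X}
    (p : Seminorm ℝ X) (hp : {x | p x < 1} ∈ @nhds X (weakTopology t) 0) :
    ∃ I : Finset (dualSubmodule t), ∀ x, (∀ φ ∈ I, φ.1 x = 0) → p x = 0 := by
  obtain ⟨I, hI⟩ := exists_finset_forall_apply_eq_zero_imp_mem hp
  refine ⟨I, fun x hx => (apply_nonneg p x).antisymm' (le_of_forall_pos_lt_add fun ε hε => ?_)⟩
  -- the common kernel is a subspace, so `p < 1` on all of it forces `p = 0`
  have h := hI (ε⁻¹ • x) fun φ hφ => by rw [map_smul, hx φ hφ, smul_zero]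
  rw [Set.mem_ofPred_eq, map_smul_eq_mul, Real.norm_eq_abs, abs_of_pos (inv_pos.mpr hε),
    inv_mul_lt_iff₀ hε, mul_one] at h
  linarith

end ElcsGeneral

section ElcsFinitePart

variable {X : Type*} [AddCommGroup X] [Module ℝ X] {ρ : X → ℝ≥0∞}

noncomputable def IsExtSeminorm.finProj (h : IsExtSeminorm ρ) : X →ₗ[ℝ] finSubmodule h :=
  ((finSubmodule h).subtype.exists_leftInverse_of_injective (Submodule.ker_subtype _)).choose

theorem IsExtSeminorm.finProj_coe (h : IsExtSeminorm ρ) (x : finSubmodule h) :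
    h.finProj x = x :=
  LinearMap.congr_fun
    ((finSubmodule h).subtype.exists_leftInverse_of_injective
      (Submodule.ker_subtype _)).choose_spec x

noncomputable def IsExtSeminorm.toSeminorm_s13 (h : IsExtSeminorm ρ) : Seminorm ℝ X :=
  Seminorm.of (fun x => (ρ (h.finProj x)).toReal)
    (fun x y => by
      rw [map_add, Submodule.coe_add]
      exact (ENNReal.toReal_mono (ENNReal.add_lt_top.2 ⟨(h.finProj x).2, (h.finProj y).2⟩).ne
        (h.2 _ _)).trans (ENNReal.toReal_add (h.finProj x).2.ne (h.finProj y).2.ne).le)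
    (fun a x => by
      rw [map_smul, Submodule.coe_smul, h.1, ENNReal.toReal_mul,
        ENNReal.toReal_ofReal (abs_nonneg a), Real.norm_eq_abs])

theorem IsExtSeminorm.ofReal_toSeminorm_of_lt_top (h : IsExtSeminorm ρ) {x : X} (hx : ρ x < ⊤) :
    ENNReal.ofReal (h.toSeminorm_s13 x) = ρ x := by
  have hproj : h.toSeminorm_s13 x = (ρ x).toReal :=
    congr_arg (fun y : finSubmodule h => (ρ y).toReal) (h.finProj_coe ⟨x, hx⟩)
  rw [hproj, ENNReal.ofReal_toReal hx.ne]

theorem IsExtSeminorm.ofReal_toSeminorm_le (h : IsExtSeminorm ρ) (x : X) :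
    ENNReal.ofReal (h.toSeminorm_s13 x) ≤ ρ x := by
  rcases eq_top_or_lt_top (ρ x) with hx | hx
  · exact hx ▸ le_top
  · exact (h.ofReal_toSeminorm_of_lt_top hx).le

theorem elcsTopology_le_of_ofReal_le {P : Set (X → ℝ≥0∞)} (hρ : ρ ∈ P) (h : IsExtSeminorm ρ)
    {p : Seminorm ℝ X} (hp : ∀ x, ENNReal.ofReal (p x) ≤ ρ x) {t' : TopologicalSpace X}
    (hws : WithSeminorms (topology := t') fun _ : Fin 1 => p) :
    elcsTopology P ≤ t' := by
  intro U hU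
  have hballs := (hws.isOpen_iff_mem_balls U).mp hU
  let _ := elcsTopology P
  refine isOpen_iff_forall_mem_open.mpr fun f hf => ?_
  obtain ⟨s, r, hr, hball⟩ := hballs f hf
  refine ⟨{g | ρ (g - f) < ENNReal.ofReal r}, fun g hg => hball ?_,
    isOpen_generateFrom_of_mem ⟨ρ, hρ, f, _, ENNReal.ofReal_pos.mpr hr, rfl⟩, ?_⟩
  · refine Seminorm.ball_antitone (Finset.sup_le fun _ _ => le_rfl) ?_
    rw [Seminorm.mem_ball, ← ENNReal.ofReal_lt_ofReal_iff hr]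
    exact (hp _).trans_lt hg
  · simpa [h.map_zero] using hr

end ElcsFinitePart

section SupSeminorm

variable {Y : Type*} [TopologicalSpace Y] {B : Set Y} {f : C(Y, ℝ)}

theorem ofReal_abs_le_supExtSeminorm {y : Y} (hy : y ∈ B) :
    ENNReal.ofReal |f y| ≤ supExtSeminorm B f :=
  le_iSup₂ (f := fun y (_ : y ∈ B) => ENNReal.ofReal |f y|) y hy

theorem supExtSeminorm_lt_top_of_abs_le {M : ℝ} (hM : ∀ y, |f y| ≤ M) :
    supExtSeminorm B f < ⊤ :=
  (iSup₂_le fun y _ => ENNReal.ofReal_le_ofReal (hM y)).trans_lt ENNReal.ofReal_lt_top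

theorem supExtSeminorm_lt_iff_of_finite (hB : B.Finite) {ε : ℝ≥0∞} (hε : 0 < ε) :
    supExtSeminorm B f < ε ↔ ∀ y ∈ B, ENNReal.ofReal |f y| < ε := by
  lift B to Finset Y using hB
  simpa only [supExtSeminorm, Finset.mem_coe, ← Finset.sup_eq_iSup] using Finset.sup_lt_iff hε

theorem supExtSeminorm_singleton (y : Y) (f : C(Y, ℝ)) :
    supExtSeminorm {y} f = ENNReal.ofReal |f y| := by
  simp [supExtSeminorm]

theorem continuous_eval_elcsTopology {P : Set (C(Y, ℝ) → ℝ≥0∞)} {y : Y}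
    (hy : supExtSeminorm {y} ∈ P) : Continuous[elcsTopology P, _] fun f : C(Y, ℝ) => f y := by
  let _ := elcsTopology P
  refine continuous_iff_continuousAt.mpr fun f => Metric.continuousAt_iff'.mpr fun ε hε => ?_
  have hball : IsOpen {g : C(Y, ℝ) | supExtSeminorm {y} (g - f) < ENNReal.ofReal ε} :=
    isOpen_generateFrom_of_mem ⟨_, hy, f, _, ENNReal.ofReal_pos.mpr hε, rfl⟩
  filter_upwards [hball.mem_nhds (by simpa [supExtSeminorm_singleton] using hε)] with g hg
  rwa [supExtSeminorm_singleton, ENNReal.ofReal_lt_ofReal_iff hε, ContinuousMap.sub_apply,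
    ← Real.dist_eq] at hg

end SupSeminorm

section Bumps

variable {Y : Type*} [TopologicalSpace Y] [T1Space Y] [NormalSpace Y]

theorem exists_continuousMap_eq_one_eqOn_zero {T : Set Y} (hT : T.Finite) (x : Y) :
    ∃ g : C(Y, ℝ), g x = 1 ∧ Set.EqOn g 0 (T \ {x}) ∧ ∀ y, |g y| ≤ 1 := by
  obtain ⟨g, hg0, hg1, hg⟩ := exists_continuous_zero_one_of_isClosed (hT.sdiff).isClosed
    isClosed_singleton Set.disjoint_sdiff_left
  exact ⟨g, hg1 rfl, hg0, fun y => abs_le.mpr ⟨by linarith [(hg y).1], (hg y).2⟩⟩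

theorem exists_bounded_forall_apply_eq_zero_ne_zero {B : Set Y} (hB : B.Infinite)
    {κ : Type*} [Fintype κ] (φ : κ → C(Y, ℝ) →ₗ[ℝ] ℝ) :
    ∃ f : C(Y, ℝ), (∃ M, ∀ y, |f y| ≤ M) ∧ (∀ j, φ j f = 0) ∧ ∃ y ∈ B, f y ≠ 0 := by
  obtain ⟨T, hTB, hTfin, hTcard⟩ := hB.exists_subset_ncard_eq (Fintype.card κ + 1)
  have := hTfin.fintype
  choose g hg1 hg0 hgb using fun x : T => exists_continuousMap_eq_one_eqOn_zero hTfin x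
  have hcard : Fintype.card κ < Fintype.card T := by
    rw [← Nat.card_eq_fintype_card (α := T), Nat.card_coe_set_eq, hTcard]
    exact Nat.lt_succ_self _
  obtain ⟨c, hc0, hc⟩ := exists_ne_zero_forall_apply_sum_smul_eq_zero hcard φ g
  have hf_apply : ∀ y, (∑ i, c i • g i) y = ∑ i, c i * g i y := fun y => by
    simp [ContinuousMap.sum_apply]
  have hf_node : ∀ x : T, (∑ i, c i • g i) x = c x := fun x => by
    rw [hf_apply, Finset.sum_eq_single x (fun i _ hix => ?_) (by simp), hg1, mul_one]
    rw [hg0 i ⟨x.2, fun h => hix (Subtype.ext h.symm)⟩, Pi.zero_apply, mul_zero]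
  obtain ⟨x₀, hx₀⟩ := Function.ne_iff.mp hc0
  refine ⟨∑ i, c i • g i, ⟨∑ i, |c i|, fun y => ?_⟩, hc, x₀, hTB x₀.2, by rwa [hf_node]⟩
  rw [hf_apply]
  refine (Finset.abs_sum_le_sum_abs _ _).trans (Finset.sum_le_sum fun i _ => ?_)
  rw [abs_mul]
  exact mul_le_of_le_one_right (abs_nonneg _) (hgb i y)

end Bumps

section FunctionSpaceTopologies

variable {Y : Type*} [TopologicalSpace Y]

theorem IsFlcTopology.ne_weakTopology_of_infinite [T1Space Y] [NormalSpace Y]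
    {P : Set (C(Y, ℝ) → ℝ≥0∞)} {t tF : TopologicalSpace C(Y, ℝ)} (ht : IsELCS t P)
    (hF : IsFlcTopology t tF) {B : Set Y} (hB : supExtSeminorm B ∈ P) (hBinf : B.Infinite) :
    tF ≠ weakTopology t := by
  intro hEq
  have hρ : IsExtSeminorm (supExtSeminorm B) := ht.1 _ hB
  set p := hρ.toSeminorm_s13
  let t' := SeminormFamily.moduleFilterBasis (fun _ : Fin 1 => p) |>.topology
  have hws : WithSeminorms (topology := t') fun _ : Fin 1 => p := ⟨rfl⟩
  have hweak : weakTopology t ≤ t' := hEq ▸ hF.le_of_withSeminorms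
    (ht.2 ▸ elcsTopology_le_of_ofReal_le hB hρ hρ.ofReal_toSeminorm_le hws) hws
  have hball : {f | p f < 1} ∈ @nhds _ (weakTopology t) 0 := by
    refine @IsOpen.mem_nhds _ (weakTopology t) _ _ (hweak _ ?_) (by simp)
    exact isOpen_lt (hws.continuous_seminorm 0) continuous_const
  obtain ⟨I, hI⟩ := p.exists_finset_forall_apply_eq_zero_imp_eq_zero hball
  obtain ⟨f, ⟨M, hM⟩, hfI, y, hyB, hfy⟩ :=
    exists_bounded_forall_apply_eq_zero_ne_zero hBinf fun φ : I => φ.1.1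
  have hfy_le : ENNReal.ofReal |f y| ≤ ENNReal.ofReal (p f) := by
    rw [hρ.ofReal_toSeminorm_of_lt_top (supExtSeminorm_lt_top_of_abs_le hM)]
    exact ofReal_abs_le_supExtSeminorm hyB
  rw [hI f fun φ hφ => hfI ⟨φ, hφ⟩, ENNReal.ofReal_zero, nonpos_iff_eq_zero,
    ENNReal.ofReal_eq_zero] at hfy_le
  exact hfy (abs_nonpos_iff.mp hfy_le)

theorem weakTopology_le_of_forall_finite {𝔅 : Set (Set Y)} {t : TopologicalSpace C(Y, ℝ)}
    (ht : t = elcsTopology {ρ | ∃ B ∈ 𝔅, ρ = supExtSeminorm B}) (hfin : ∀ B ∈ 𝔅, B.Finite)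
    (hsing : ∀ y, {y} ∈ 𝔅) :
    weakTopology t ≤ t := by
  have heval (y : Y) : Continuous[weakTopology t, _] fun g : C(Y, ℝ) => g y :=
    continuous_iff_le_induced.mpr <| iInf_le
      (fun φ : dualSubmodule t => induced (fun x => φ.1 x) inferInstance)
      ⟨LinearMap.proj y ∘ₗ ContinuousMap.coeFnLinearMap ℝ, ht ▸ continuous_eval_elcsTopology
        (P := {ρ | ∃ B ∈ 𝔅, ρ = supExtSeminorm B}) ⟨{y}, hsing y, rfl⟩⟩
  conv_rhs => rw [ht]
  refine le_generateFrom ?_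
  rintro _ ⟨_, ⟨B, hB, rfl⟩, c, ε, hε, rfl⟩
  let _ := weakTopology t
  have hball :
      {g | supExtSeminorm B (g - c) < ε} = ⋂ y ∈ B, {g | ENNReal.ofReal |g y - c y| < ε} := by
    ext g
    simp [supExtSeminorm_lt_iff_of_finite (hfin B hB) hε]
  rw [hball]
  exact (hfin B hB).isOpen_biInter fun y _ =>
    isOpen_lt (ENNReal.continuous_ofReal.comp ((heval y).sub continuous_const).abs)
      continuous_const

end FunctionSpaceTopologies

theorem mem_of_finite_of_nonempty {Y : Type*} {𝔅 : Set (Set Y)}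
    (hcov : ∀ y : Y, ∃ B ∈ 𝔅, y ∈ B)
    (hunion : ∀ B₁ ∈ 𝔅, ∀ B₂ ∈ 𝔅, B₁ ∪ B₂ ∈ 𝔅)
    (hdown : ∀ B ∈ 𝔅, ∀ A : Set Y, A ⊆ B → A.Nonempty → A ∈ 𝔅)
    {S : Set Y} (hS : S.Finite) (hne : S.Nonempty) : S ∈ 𝔅 := by
  induction S, hS using Set.Finite.induction_on with
  | empty => exact absurd hne Set.not_nonempty_empty
  | @insert a s _ _ ih =>
    have hsing : {a} ∈ 𝔅 := by
      obtain ⟨B, hB, haB⟩ := hcov a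
      exact hdown B hB {a} (Set.singleton_subset_iff.mpr haB) (Set.singleton_nonempty a)
    rcases s.eq_empty_or_nonempty with rfl | hs
    · simpa using hsing
    · exact Set.insert_eq a s ▸ hunion _ hsing _ (ih hs)

theorem stmt13_general {Y : Type*} [MetricSpace Y] (𝔅 : Set (Set Y))
    (hne : ∀ B ∈ 𝔅, Set.Nonempty B)
    (hcov : ∀ y : Y, ∃ B ∈ 𝔅, y ∈ B)
    (hunion : ∀ B₁ ∈ 𝔅, ∀ B₂ ∈ 𝔅, B₁ ∪ B₂ ∈ 𝔅)
    (hdown : ∀ B ∈ 𝔅, ∀ A : Set Y, A ⊆ B → A.Nonempty → A ∈ 𝔅)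
    (t tF : TopologicalSpace C(Y, ℝ))
    (ht : IsELCS t {ρ | ∃ B ∈ 𝔅, ρ = supExtSeminorm B})
    (hF : IsFlcTopology t tF) :
    tF = weakTopology t ↔ 𝔅 = {S : Set Y | S.Finite ∧ S.Nonempty} := by
  constructor
  · intro hEq
    ext B
    refine ⟨fun hB => ⟨?_, hne B hB⟩,
      fun hB => mem_of_finite_of_nonempty hcov hunion hdown hB.1 hB.2⟩
    have hρ : supExtSeminorm B ∈ {ρ | ∃ B ∈ 𝔅, ρ = supExtSeminorm B} := ⟨B, hB, rfl⟩
    exact Set.not_infinite.mp fun hBinf => hF.ne_weakTopology_of_infinite ht hρ hBinf hEq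
  · rintro rfl
    have hweak := weakTopology_le_of_forall_finite ht.2 (fun B hB => hB.1)
      fun y => ⟨Set.finite_singleton y, Set.singleton_nonempty y⟩
    exact le_antisymm hF.le_weakTopology (hweak.trans hF.1)

/-- for a bornology `𝔅` with closed base on a metric space, the flc topology
of `(C(X), τ_𝔅)` equals its weak topology iff `𝔅` is the bornology of finite sets. -/
theorem stmt13 {Y : Type*} [MetricSpace Y] (𝔅 : Set (Set Y))
    (hne : ∀ B ∈ 𝔅, Set.Nonempty B)
    (hcov : ∀ y : Y, ∃ B ∈ 𝔅, y ∈ B)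
    (hunion : ∀ B₁ ∈ 𝔅, ∀ B₂ ∈ 𝔅, B₁ ∪ B₂ ∈ 𝔅)
    (hdown : ∀ B ∈ 𝔅, ∀ A : Set Y, A ⊆ B → A.Nonempty → A ∈ 𝔅)
    (hclosedbase : ∀ B ∈ 𝔅, ∃ C ∈ 𝔅, IsClosed C ∧ B ⊆ C)
    (t tF : TopologicalSpace C(Y, ℝ))
    (ht : IsELCS t {ρ | ∃ B ∈ 𝔅, ρ = supExtSeminorm B})
    (hF : IsFlcTopology t tF) :
    tF = weakTopology t ↔ 𝔅 = {S : Set Y | S.Finite ∧ S.Nonempty} :=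
  stmt13_general 𝔅 hne hcov hunion hdown t tF ht hF
end

section
/- Let (X, τ) be an elcs. Then τ is induced by the family of extended seminorms {ρ_A : A ⊆ X* equicontinuous on (X, τ)}, where ρ_A(x) = sup_{f∈A} |f(x)|. -/
open scoped ENNReal Pointwise
open TopologicalSpace

/-!
`ρ_A` is an extended seminorm for every `A ⊆ X*`, and for equicontinuous `A` its balls are open,
since `A ⊆ U°` gives `ρ_A ≤ 1` on the neighbourhood `U`. Conversely every defining extended
seminorm `ρ` of the elcs is `ρ_A` for the equicontinuous set `A = {f : |f| ≤ ρ}`: at a point where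
`ρ` is finite this is Hahn–Banach for the real seminorm `ρ` on the subspace `{ρ < ∞}`, and at a
point outside that subspace there are functionals vanishing on it and taking arbitrarily large
values there.
-/

section

open Topology

variable {X : Type*} [AddCommGroup X] [Module ℝ X]

lemma ofReal_abs_le_dualSupFun {A : Set (X →ₗ[ℝ] ℝ)} {f : X →ₗ[ℝ] ℝ} (hf : f ∈ A) (x : X) :
    ENNReal.ofReal |f x| ≤ dualSupFun A x :=
  le_iSup₂ (f := fun g (_ : g ∈ A) => ENNReal.ofReal |g x|) f hf

lemma dualSupFun_isExtSeminorm (A : Set (X →ₗ[ℝ] ℝ)) : IsExtSeminorm (dualSupFun A) := by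
  refine ⟨fun a x => ?_, fun x y => iSup₂_le fun f hf => ?_⟩
  · simp_rw [dualSupFun, map_smul, smul_eq_mul, abs_mul, ENNReal.ofReal_mul (abs_nonneg a),
      ENNReal.mul_iSup]
  · calc ENNReal.ofReal |f (x + y)| ≤ ENNReal.ofReal (|f x| + |f y|) := by
          rw [map_add]; exact ENNReal.ofReal_le_ofReal (abs_add_le _ _)
      _ ≤ ENNReal.ofReal |f x| + ENNReal.ofReal |f y| := ENNReal.ofReal_add_le
      _ ≤ dualSupFun A x + dualSupFun A y :=
          add_le_add (ofReal_abs_le_dualSupFun hf x) (ofReal_abs_le_dualSupFun hf y)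

/-- The polar `U°` of the unit ball `U = {ρ < 1}` of `ρ`. -/
def dominatedDual (ρ : X → ℝ≥0∞) : Set (X →ₗ[ℝ] ℝ) :=
  {f | ∀ y, ENNReal.ofReal |f y| ≤ ρ y}

namespace IsExtSeminorm

variable {ρ : X → ℝ≥0∞} (hρ : IsExtSeminorm ρ)
include hρ

noncomputable def finSeminorm : Seminorm ℝ (finSubmodule hρ) :=
  Seminorm.of (fun v => (ρ v).toReal)
    (fun v w => by
      rw [← ENNReal.toReal_add v.2.ne w.2.ne]
      exact ENNReal.toReal_mono (ENNReal.add_lt_top.2 ⟨v.2, w.2⟩).ne (hρ.2 v w))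
    (fun a v => by
      simp only [Submodule.coe_smul, hρ.1 a, ENNReal.toReal_mul,
        ENNReal.toReal_ofReal (abs_nonneg a), Real.norm_eq_abs])

lemma ofReal_finSeminorm (v : finSubmodule hρ) : ENNReal.ofReal (hρ.finSeminorm v) = ρ v :=
  ENNReal.ofReal_toReal v.2.ne

lemma mem_dominatedDual {f : X →ₗ[ℝ] ℝ} (hf : ∀ v : finSubmodule hρ, |f v| ≤ hρ.finSeminorm v) :
    f ∈ dominatedDual ρ := fun x => by
  by_cases hx : ρ x < ⊤
  · rw [← hρ.ofReal_finSeminorm ⟨x, hx⟩]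
    exact ENNReal.ofReal_le_ofReal (hf ⟨x, hx⟩)
  · rw [not_lt_top_iff.1 hx]
    exact le_top

lemma exists_mem_dominatedDual_eq_of_lt_top {x : X} (hx : ρ x < ⊤) :
    ∃ f ∈ dominatedDual ρ, ENNReal.ofReal (f x) = ρ x := by
  rcases eq_or_ne x 0 with rfl | hx0
  · exact ⟨0, fun y => by simp, by simp [hρ.map_zero]⟩
  set p := hρ.finSeminorm
  set x' : finSubmodule hρ := ⟨x, hx⟩
  have hx'0 : x' ≠ 0 := fun h => hx0 (congrArg Subtype.val h)
  set f₀ : finSubmodule hρ →ₗ.[ℝ] ℝ := LinearPMap.mkSpanSingleton x' (p x') hx'0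
  have hf₀ : ∀ v : f₀.domain, f₀ v ≤ p v := by
    rintro ⟨v, hv⟩
    obtain ⟨a, rfl⟩ := Submodule.mem_span_singleton.1 hv
    rw [LinearPMap.mkSpanSingleton'_apply, map_smul_eq_mul, smul_eq_mul, Real.norm_eq_abs]
    exact mul_le_mul_of_nonneg_right (le_abs_self a) (apply_nonneg p x')
  obtain ⟨g, hgf₀, hgp⟩ := Module.Dual.exists_extension_of_le_seminorm_real _ f₀.toFun hf₀
  obtain ⟨f, hfg⟩ := LinearMap.exists_extend g
  have hfv : ∀ v : finSubmodule hρ, f v = g v := fun v => LinearMap.congr_fun hfg v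
  refine ⟨f, hρ.mem_dominatedDual fun v => (hfv v).symm ▸ hgp v, ?_⟩
  have hgx : g x' = p x' := by
    rw [hgf₀ ⟨x', Submodule.mem_span_singleton_self x'⟩]
    exact LinearPMap.mkSpanSingleton_apply ℝ ℝ hx'0 _
  rw [hfv x', hgx]
  exact hρ.ofReal_finSeminorm x'

lemma exists_mem_dominatedDual_eq_natCast_of_eq_top {x : X} (hx : ρ x = ⊤) (n : ℕ) :
    ∃ f ∈ dominatedDual ρ, f x = n := by
  have hxV : x ∉ finSubmodule hρ := fun h => (h : ρ x < ⊤).ne hx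
  obtain ⟨f, hf0, hfx⟩ := LinearMap.exists_extend_of_notMem 0 hxV (n : ℝ)
  refine ⟨f, hρ.mem_dominatedDual fun v => ?_, hfx⟩
  rw [show f v = 0 from LinearMap.congr_fun hf0 v, abs_zero]
  exact apply_nonneg _ v

end IsExtSeminorm

lemma IsExtSeminorm.dualSupFun_dominatedDual {ρ : X → ℝ≥0∞} (hρ : IsExtSeminorm ρ) :
    dualSupFun (dominatedDual ρ) = ρ := by
  funext x
  refine le_antisymm (iSup₂_le fun f hf => hf x) ?_
  by_cases hx : ρ x < ⊤
  · obtain ⟨f, hf, hfx⟩ := hρ.exists_mem_dominatedDual_eq_of_lt_top hx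
    calc ρ x = ENNReal.ofReal (f x) := hfx.symm
      _ ≤ ENNReal.ofReal |f x| := ENNReal.ofReal_le_ofReal (le_abs_self _)
      _ ≤ dualSupFun (dominatedDual ρ) x := ofReal_abs_le_dualSupFun hf x
  · rw [not_lt_top_iff.1 hx, ← ENNReal.iSup_natCast]
    refine iSup_le fun n => ?_
    obtain ⟨f, hf, hfx⟩ := hρ.exists_mem_dominatedDual_eq_natCast_of_eq_top (not_lt_top_iff.1 hx) n
    calc (n : ℝ≥0∞) = ENNReal.ofReal |f x| := by
          rw [hfx, Nat.abs_cast, ENNReal.ofReal_natCast]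
      _ ≤ dualSupFun (dominatedDual ρ) x := ofReal_abs_le_dualSupFun hf x

section ElcsTopology

variable {P : Set (X → ℝ≥0∞)} (hP : ∀ ρ ∈ P, IsExtSeminorm ρ)
include hP

lemma continuous_smul_sub_elcsTopology {a : ℝ} (ha : a ≠ 0) (b : X) :
    Continuous[elcsTopology P, elcsTopology P] (fun y => a • (y - b)) := by
  rw [elcsTopology, continuous_generateFrom_iff]
  rintro s ⟨ρ, hρ, d, ε, hε, rfl⟩
  have ha' : ENNReal.ofReal |a| ≠ 0 := by simpa using ha
  have hpre : (fun y => a • (y - b)) ⁻¹' {x | ρ (x - d) < ε}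
      = {y | ρ (y - (b + a⁻¹ • d)) < ε / ENNReal.ofReal |a|} := by
    ext y
    have hy : a • (y - b) - d = a • (y - (b + a⁻¹ • d)) := by
      rw [smul_sub, smul_sub, smul_add, smul_inv_smul₀ ha, sub_sub]
    simp only [Set.mem_preimage, Set.mem_ofPred_eq, hy, (hP ρ hρ).1 a]
    rw [ENNReal.lt_div_iff_mul_lt (Or.inl ha') (Or.inl ENNReal.ofReal_ne_top), mul_comm]
  rw [hpre]
  exact isOpen_generateFrom_of_mem ⟨ρ, hρ, b + a⁻¹ • d, ε / ENNReal.ofReal |a|,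
    ENNReal.div_pos hε.ne' ENNReal.ofReal_ne_top, rfl⟩

lemma isOpen_dualSupFun_sub_lt {A : Set (X →ₗ[ℝ] ℝ)} (hA : EquicontSet (elcsTopology P) A)
    (c : X) (ε : ℝ≥0∞) : IsOpen[elcsTopology P] {x | dualSupFun A (x - c) < ε} := by
  let := elcsTopology P
  obtain ⟨U, hU, hAU⟩ := hA
  rw [isOpen_iff_mem_nhds]
  intro x₀ (hx₀ : dualSupFun A (x₀ - c) < ε)
  obtain ⟨δ, hδ, hδε⟩ := ENNReal.lt_iff_exists_add_pos_lt.1 hx₀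
  have hδ' : (δ : ℝ) ≠ 0 := NNReal.coe_ne_zero.2 hδ.ne'
  have hnhds : (fun y => (δ : ℝ)⁻¹ • (y - x₀)) ⁻¹' U ∈ 𝓝 x₀ :=
    (continuous_smul_sub_elcsTopology hP (inv_ne_zero hδ') x₀).continuousAt.preimage_mem_nhds
      (by simpa using hU)
  refine Filter.mem_of_superset hnhds fun y (hy : (δ : ℝ)⁻¹ • (y - x₀) ∈ U) => ?_
  have hsA := dualSupFun_isExtSeminorm A
  have hyx₀ : dualSupFun A (y - x₀) ≤ δ :=
    calc dualSupFun A (y - x₀)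
        = ENNReal.ofReal |(δ : ℝ)| * dualSupFun A ((δ : ℝ)⁻¹ • (y - x₀)) := by
          rw [← hsA.1, smul_inv_smul₀ hδ']
      _ ≤ ENNReal.ofReal |(δ : ℝ)| * 1 := by
          gcongr
          exact iSup₂_le fun f hf => ENNReal.ofReal_le_one.2 (hAU f hf _ hy)
      _ = δ := by rw [mul_one, NNReal.abs_eq, ENNReal.ofReal_coe_nnreal]
  calc dualSupFun A (y - c) ≤ dualSupFun A (x₀ - c) + dualSupFun A (y - x₀) := by
        simpa using hsA.2 (x₀ - c) (y - x₀)
    _ ≤ dualSupFun A (x₀ - c) + δ := by gcongr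
    _ < ε := hδε

lemma equicontSet_dominatedDual {ρ : X → ℝ≥0∞} (hρ : ρ ∈ P) :
    EquicontSet (elcsTopology P) (dominatedDual ρ) := by
  refine ⟨{x | ρ x < 1}, ?_, fun f hf x hx => (ENNReal.ofReal_lt_one.1 ((hf x).trans_lt hx)).le⟩
  let := elcsTopology P
  have hopen : IsOpen {x | ρ x < 1} :=
    isOpen_generateFrom_of_mem ⟨ρ, hρ, 0, 1, one_pos, by simp⟩
  exact hopen.mem_nhds (by simp [(hP ρ hρ).map_zero])

end ElcsTopology

end

/-- `τ` is induced by the extended seminorms `ρ_A` for `A ⊆ X*`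
equicontinuous. -/
theorem stmt15 {X : Type*} [AddCommGroup X] [Module ℝ X]
    (t : TopologicalSpace X) (P : Set (X → ℝ≥0∞)) (hP : IsELCS t P) :
    IsELCS t {ρ | ∃ A : Set (X →ₗ[ℝ] ℝ), EquicontSet t A ∧ ρ = dualSupFun A} := by
  obtain ⟨hPsem, rfl⟩ := hP
  refine ⟨fun ρ ⟨A, _, hρA⟩ => hρA ▸ dualSupFun_isExtSeminorm A, le_antisymm ?_ ?_⟩
  · refine le_generateFrom ?_
    rintro s ⟨ρ, ⟨A, hA, rfl⟩, c, ε, -, rfl⟩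
    exact isOpen_dualSupFun_sub_lt hPsem hA c ε
  · refine le_generateFrom ?_
    rintro s ⟨ρ, hρ, c, ε, hε, rfl⟩
    refine isOpen_generateFrom_of_mem ⟨ρ, ⟨dominatedDual ρ, ?_, ?_⟩, c, ε, hε, rfl⟩
    · exact equicontSet_dominatedDual hPsem hρ
    · exact ((hPsem ρ hρ).dualSupFun_dominatedDual).symm
end

section
/- (Extended Banach–Alaoglu) Let (X, τ) be an elcs with flc topology τ_F, and let U be an absolutely convex neighborhood of 0 in (X, τ). The following are equivalent: (1) the polar U° = {f ∈ X* : |f(x)| ≤ 1 for all x ∈ U} is compact in the weak* topology on X*; (2) 0 ∈ Core(U); (3) U is a neighborhood of 0 in (X, τ_F). -/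
open scoped ENNReal Pointwise
open TopologicalSpace

/-!
A linear functional bounded on a neighbourhood of `0` is automatically continuous, because
homotheties and translations are continuous for an elcs topology, even though scalar
multiplication is not jointly continuous. Hence `U°` is exactly the set of linear functionals
bounded by `1` on `U`: a closed subset of `ℝ^X` for the product topology. If `U` absorbs every
point, this set lies in a product of compact intervals, and Tychonoff gives compactness. If some
`x₀` is not absorbed, then `x₀` lies outside the subspace `⋃ r > 0, r • U`, and a functional
killing this subspace but not `x₀` spans a line inside `U°` that is unbounded at `x₀`.
Finally, an absorbing absolutely convex `U` is the unit ball of its gauge, whose seminorm topology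
is a locally convex vector topology coarser than `τ`, hence coarser than `τ_F`.
-/

open Filter Topology

section ExtendedBanachAlaoglu

variable {X : Type*} [AddCommGroup X] [Module ℝ X] {U : Set X}

theorem Balanced.zeroInCore_iff (hbal : Balanced ℝ U) :
    ZeroInCore U ↔ ∀ x : X, ∃ r : ℝ, 0 < r ∧ r • x ∈ U := by
  refine forall_congr' fun x => ⟨fun ⟨δ, hδ, hmem⟩ => ⟨δ, hδ, hmem δ hδ.le le_rfl⟩, ?_⟩
  rintro ⟨r, hr, hrx⟩
  exact ⟨r, hr, fun s hs hsr => hbal.smul_mem_mono hrx (by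
    rwa [Real.norm_of_nonneg hs, Real.norm_of_nonneg hr.le])⟩

theorem Balanced.zeroInCore_iff_absorbent (hbal : Balanced ℝ U) :
    ZeroInCore U ↔ Absorbent ℝ U := by
  rw [hbal.zeroInCore_iff, absorbent_iff_eventually_nhdsNE_zero]
  refine forall_congr' fun x => ⟨fun ⟨r, hr, hrx⟩ => ?_, fun h => ?_⟩
  · refine Eventually.filter_mono nhdsWithin_le_nhds ?_
    filter_upwards [Metric.closedBall_mem_nhds (0 : ℝ) hr] with c hc
    refine hbal.smul_mem_mono hrx ?_
    rwa [mem_closedBall_zero_iff, ← Real.norm_of_nonneg hr.le] at hc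
  · have hpos : ∀ᶠ c : ℝ in 𝓝[>] 0, c • x ∈ U ∧ 0 < c :=
      (h.filter_mono (nhdsWithin_mono _ fun c hc => ne_of_gt hc)).and self_mem_nhdsWithin
    obtain ⟨r, hrx, hr⟩ := hpos.exists
    exact ⟨r, hr, hrx⟩

def absorbedSubmodule (hbal : Balanced ℝ U) (hconv : Convex ℝ U) (h0 : (0 : X) ∈ U) :
    Submodule ℝ X where
  carrier := {x | ∃ r : ℝ, 0 < r ∧ r • x ∈ U}
  zero_mem' := ⟨1, one_pos, by rwa [smul_zero]⟩
  add_mem' := by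
    rintro x y ⟨r, hr, hrx⟩ ⟨s, hs, hsy⟩
    have hm : 0 < min r s := lt_min hr hs
    have hnorm : ∀ a : ℝ, 0 < a → min r s ≤ a → ‖min r s‖ ≤ ‖a‖ := fun a ha hle => by
      rwa [Real.norm_of_nonneg hm.le, Real.norm_of_nonneg ha.le]
    have hmid := hconv (hbal.smul_mem_mono hrx (hnorm r hr (min_le_left r s)))
      (hbal.smul_mem_mono hsy (hnorm s hs (min_le_right r s)))
      (by norm_num : (0 : ℝ) ≤ 1 / 2) (by norm_num : (0 : ℝ) ≤ 1 / 2) (by norm_num)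
    refine ⟨min r s / 2, by positivity, ?_⟩
    rw [smul_smul, smul_smul, ← smul_add] at hmid
    convert hmid using 2
    ring
  smul_mem' := by
    rintro a x ⟨r, hr, hrx⟩
    refine ⟨r / (|a| + 1), by positivity, ?_⟩
    rw [smul_smul]
    refine hbal.smul_mem_mono hrx ?_
    rw [norm_mul, Real.norm_of_nonneg (by positivity : 0 ≤ r / (|a| + 1)),
      Real.norm_of_nonneg hr.le, Real.norm_eq_abs, div_mul_eq_mul_div, div_le_iff₀ (by positivity)]
    nlinarith [abs_nonneg a]

variable {t : TopologicalSpace X} {P : Set (X → ℝ≥0∞)}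

theorem IsELCS.continuous_smul_add (hP : IsELCS t P) {r : ℝ} (hr : r ≠ 0) (c : X) :
    Continuous[t, t] fun x => r • x + c := by
  obtain ⟨hsem, rfl⟩ := hP
  refine continuous_generateFrom_iff.2 ?_
  rintro s ⟨ρ, hρP, c', ε, hε, rfl⟩
  have hρ := hsem ρ hρP
  have hr0 : ENNReal.ofReal |r| ≠ 0 := (ENNReal.ofReal_pos.2 (abs_pos.2 hr)).ne'
  have hrtop : ENNReal.ofReal |r| ≠ ⊤ := ENNReal.ofReal_ne_top
  have hpre : (fun x => r • x + c) ⁻¹' {x | ρ (x - c') < ε}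
      = {x | ρ (x - r⁻¹ • (c' - c)) < ε / ENNReal.ofReal |r|} := by
    ext x
    have hsub : r • x + c - c' = r • (x - r⁻¹ • (c' - c)) := by
      rw [smul_sub, smul_smul, mul_inv_cancel₀ hr, one_smul]
      abel
    simp only [Set.mem_preimage, Set.mem_ofPred_eq]
    rw [hsub, hρ.1, ENNReal.lt_div_iff_mul_lt (Or.inl hr0) (Or.inl hrtop), mul_comm]
  rw [hpre]
  exact isOpen_generateFrom_of_mem ⟨ρ, hρP, _, _, ENNReal.div_pos hε.ne' hrtop, rfl⟩

theorem IsELCS.setOf_sub_mem_smul_mem_nhds (hP : IsELCS t P) (hU : U ∈ @nhds X t 0)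
    {r : ℝ} (hr : r ≠ 0) (x₀ : X) : {x | x - x₀ ∈ r • U} ∈ @nhds X t x₀ := by
  let _ := t
  have hpre : (fun x => r⁻¹ • x + -(r⁻¹ • x₀)) ⁻¹' U ∈ 𝓝 x₀ :=
    (hP.continuous_smul_add (inv_ne_zero hr) _).continuousAt.preimage_mem_nhds
      (by simpa using hU)
  refine mem_of_superset hpre fun x hx => ?_
  rw [Set.mem_ofPred_eq, Set.mem_smul_set_iff_inv_smul_mem₀ hr, smul_sub, sub_eq_add_neg]
  exact hx

theorem IsELCS.mem_dualSubmodule_of_abs_le_one (hP : IsELCS t P) (hU : U ∈ @nhds X t 0)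
    (f : X →ₗ[ℝ] ℝ) (hf : ∀ x ∈ U, |f x| ≤ 1) : f ∈ dualSubmodule t := by
  let _ := t
  change Continuous fun x => f x
  refine continuous_iff_continuousAt.2 fun x₀ => Metric.tendsto_nhds.2 fun ε hε => ?_
  filter_upwards [hP.setOf_sub_mem_smul_mem_nhds hU (half_pos hε).ne' x₀]
    with x ⟨u, hu, hxu⟩
  rw [Real.dist_eq, ← map_sub, ← hxu, map_smul, smul_eq_mul, abs_mul, abs_of_pos (half_pos hε)]
  nlinarith [hf u hu]

theorem isEmbedding_weakStar_coeFn (t : TopologicalSpace X) :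
    @IsEmbedding _ _ (weakStarTopology t) _ fun f : dualSubmodule t => ⇑f.1 := by
  let _ := weakStarTopology t
  refine ⟨⟨?_⟩, fun f g h => Subtype.ext (LinearMap.ext (congrFun h))⟩
  rw [Pi.topologicalSpace, induced_iInf]
  simp only [induced_compose]
  rfl

theorem IsELCS.isCompact_polar_of_zeroInCore (hP : IsELCS t P) (hU : U ∈ @nhds X t 0)
    (hcore : ZeroInCore U) :
    @IsCompact _ (weakStarTopology t) {f : dualSubmodule t | ∀ x ∈ U, |f.1 x| ≤ 1} := by
  choose δ hδ hδU using hcore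
  let _ := weakStarTopology t
  have himage : (fun f : dualSubmodule t => ⇑f.1) '' {f | ∀ x ∈ U, |f.1 x| ≤ 1} =
      Set.range ((⇑) : (X →ₗ[ℝ] ℝ) → X → ℝ) ∩ {φ | ∀ x ∈ U, |φ x| ≤ 1} := by
    ext φ
    constructor
    · rintro ⟨f, hf, rfl⟩
      exact ⟨⟨f.1, rfl⟩, hf⟩
    · rintro ⟨⟨f, rfl⟩, hf⟩
      exact ⟨⟨f, hP.mem_dualSubmodule_of_abs_le_one hU f hf⟩, hf, rfl⟩
  rw [(isEmbedding_weakStar_coeFn t).isCompact_iff, himage]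
  refine (isCompact_univ_pi fun x => isCompact_Icc (a := -(δ x)⁻¹) (b := (δ x)⁻¹))
    |>.of_isClosed_subset ?_ ?_
  · refine (LinearMap.isClosed_range_coe X ℝ (RingHom.id ℝ)).inter ?_
    simp only [Set.ofPred_forall]
    exact isClosed_iInter fun x => isClosed_iInter fun _ =>
      isClosed_le (continuous_apply x).abs continuous_const
  · rintro _ ⟨⟨f, rfl⟩, hf⟩ x -
    have hfx := hf _ (hδU x (δ x) (hδ x).le le_rfl)
    rw [map_smul, smul_eq_mul, abs_mul, abs_of_pos (hδ x)] at hfx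
    rw [Set.mem_Icc, ← abs_le, ← one_div, le_div_iff₀' (hδ x)]
    exact hfx

theorem IsELCS.zeroInCore_of_isCompact_polar (hP : IsELCS t P) (hU : U ∈ @nhds X t 0)
    (hbal : Balanced ℝ U) (hconv : Convex ℝ U)
    (hcomp : @IsCompact _ (weakStarTopology t) {f : dualSubmodule t | ∀ x ∈ U, |f.1 x| ≤ 1}) :
    ZeroInCore U := by
  let _ := weakStarTopology t
  have h0 : (0 : X) ∈ U := @mem_of_mem_nhds X t _ _ hU
  by_contra hcore
  obtain ⟨x₀, hx₀⟩ : ∃ x₀, x₀ ∉ absorbedSubmodule hbal hconv h0 := by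
    simpa [hbal.zeroInCore_iff, absorbedSubmodule] using hcore
  obtain ⟨f, hfx₀, hfY⟩ := Submodule.exists_dual_map_eq_bot_of_notMem hx₀ inferInstance
  have hfU : ∀ x ∈ U, f x = 0 := fun x hx =>
    LinearMap.le_ker_iff_map.2 hfY ⟨1, one_pos, by rwa [one_smul]⟩
  let line : ℝ → dualSubmodule t := fun c =>
    ⟨c • f, hP.mem_dualSubmodule_of_abs_le_one hU _ fun x hx => by simp [hfU x hx]⟩
  obtain ⟨M, hM⟩ := (hcomp.image
    ((continuous_apply x₀).comp (isEmbedding_weakStar_coeFn t).continuous)).bddAbove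
  have hle : M + 1 ≤ M := by
    simpa only [Function.comp_apply, LinearMap.smul_apply, smul_eq_mul,
      div_mul_cancel₀ _ hfx₀, line]
      using hM ⟨line ((M + 1) / f x₀), fun x hx => by simp [line, hfU x hx], rfl⟩
  linarith

theorem IsELCS.le_of_withSeminorms (hP : IsELCS t P) (hU : U ∈ @nhds X t 0)
    {p : Seminorm ℝ X} (hpU : ∀ x ∈ U, p x ≤ 1) [t' : TopologicalSpace X]
    (hp : WithSeminorms fun _ : Unit => p) : t ≤ t' := by
  refine (le_iff_nhds _ _).2 fun x₀ V hV => ?_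
  obtain ⟨s, r, hr, hsub⟩ := (hp.mem_nhds_iff x₀ V).1 hV
  refine mem_of_superset (hP.setOf_sub_mem_smul_mem_nhds hU (half_pos hr).ne' x₀)
    fun x ⟨u, hu, hxu⟩ => hsub ?_
  rw [Seminorm.mem_ball, ← hxu]
  calc (s.sup fun _ => p) ((r / 2) • u) ≤ p ((r / 2) • u) :=
        (Finset.sup_le fun _ _ => le_rfl : s.sup (fun _ => p) ≤ p) _
    _ = r / 2 * p u := by rw [map_smul_eq_mul, Real.norm_of_nonneg (half_pos hr).le]
    _ < r := by nlinarith [hpU u hu]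

theorem IsELCS.mem_nhds_of_isFlcTopology {tF : TopologicalSpace X} (hP : IsELCS t P)
    (hF : IsFlcTopology t tF) (hU : U ∈ @nhds X t 0) (hbal : Balanced ℝ U)
    (hconv : Convex ℝ U) (habs : Absorbent ℝ U) : U ∈ @nhds X tF 0 := by
  let p := gaugeSeminorm hbal hconv habs
  let t' : TopologicalSpace X :=
    (SeminormFamily.moduleFilterBasis (𝕜 := ℝ) fun _ : Unit => p).topology
  have hp : WithSeminorms fun _ : Unit => p := ⟨rfl⟩
  have hle : tF ≤ t' := hF.2.2.2.2 t'
    (hP.le_of_withSeminorms hU (fun _ hx => gauge_le_one_of_mem hx) hp)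
    hp.topologicalAddGroup hp.continuousSMul hp.toLocallyConvexSpace
  refine (le_iff_nhds _ _).1 hle 0
    ((hp.mem_nhds_iff 0 U).2 ⟨Finset.univ, 1, one_pos, fun x hx => ?_⟩)
  rw [Finset.sup_const Finset.univ_nonempty, Seminorm.mem_ball, sub_zero] at hx
  exact setOfPred_gauge_lt_one_subset_self hconv (@mem_of_mem_nhds X t _ _ hU) habs hx

end ExtendedBanachAlaoglu

/-- extended Banach–Alaoglu: for an absolutely convex neighborhood `U`
of `0`, `U°` is weak* compact ↔ `0 ∈ Core U` ↔ `U` is a `τ_F`-neighborhood of `0`. -/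
theorem stmt16 {X : Type*} [AddCommGroup X] [Module ℝ X]
    (t tF : TopologicalSpace X) (P : Set (X → ℝ≥0∞)) (hP : IsELCS t P)
    (hF : IsFlcTopology t tF)
    (U : Set X) (hU : U ∈ @nhds X t 0) (hbal : Balanced ℝ U) (hconv : Convex ℝ U) :
    (@IsCompact ↥(dualSubmodule t) (weakStarTopology t)
        {f : ↥(dualSubmodule t) | ∀ x ∈ U, |f.1 x| ≤ 1} ↔ ZeroInCore U) ∧
    (ZeroInCore U ↔ U ∈ @nhds X tF 0) := by
  refine ⟨⟨hP.zeroInCore_of_isCompact_polar hU hbal hconv, hP.isCompact_polar_of_zeroInCore hU⟩,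
    ?_⟩
  rw [hbal.zeroInCore_iff_absorbent]
  refine ⟨hP.mem_nhds_of_isFlcTopology hF hU hbal hconv, fun hUF => ?_⟩
  let _ := tF
  have := hF.2.2.1
  exact absorbent_nhds_zero hUF
end
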